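/- Let V : [0,∞) → ℝ be a right-continuous function with left limits, of finite variation on every compact interval, with canonical decomposition V = V^c + V^d into its continuous part V^c and pure-jump part V^d. If V^c is not identically equal to V^c(0) (i.e., the continuous part is nondegenerate), then the set of levels x ∈ ℝ through which V increases or decreases at some time, {x ∈ ℝ : ℐ(x) ∪ 𝒟(x) ≠ ∅}, has positive Lebesgue (outer) measure. -/

import Mathlib

open MeasureTheory Set Filter
open scoped ENNReal NNReal

noncomputable section

/-- `V` increases through the level `x` at time `t`: `t > 0`, `V t = x`, `V` is continuous
at `t` (within the domain `[0,∞)`), and `V s - V t` has the same sign as `s - t` for all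
`s ≥ 0` in some neighborhood of `t`. -/
def IncreasesThrough (V : ℝ → ℝ) (x t : ℝ) : Prop :=
  0 < t ∧ V t = x ∧ ContinuousWithinAt V (Set.Ici 0) t ∧
    ∃ ε > 0, ∀ s ∈ Set.Ici (0 : ℝ), |s - t| < ε →
      ((s < t → V s < V t) ∧ (t < s → V t < V s))

/-- `V` decreases through the level `x` at time `t` iff `-V` increases through `-x` at `t`. -/
def DecreasesThrough (V : ℝ → ℝ) (x t : ℝ) : Prop :=
  IncreasesThrough (fun s => -V s) (-x) t

/-- `(0,t] ∩ ℐ(x)`: the increasing passage times of `V` through `x` up to time `t`. -/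
def incSet (V : ℝ → ℝ) (x t : ℝ) : Set ℝ :=
  {s | s ∈ Set.Ioc 0 t ∧ IncreasesThrough V x s}

/-- `(0,t] ∩ 𝒟(x)`: the decreasing passage times of `V` through `x` up to time `t`. -/
def decSet (V : ℝ → ℝ) (x t : ℝ) : Set ℝ :=
  {s | s ∈ Set.Ioc 0 t ∧ DecreasesThrough V x s}

/-- The signed local time `ℓ^x(t) = Card((0,t] ∩ ℐ(x)) − Card((0,t] ∩ 𝒟(x))`
(meaningful when both sets are finite). -/
def signedLocalTime (V : ℝ → ℝ) (x t : ℝ) : ℤ :=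
  ((incSet V x t).ncard : ℤ) - ((decSet V x t).ncard : ℤ)

/-- The absolute local time `λ^x(t) = Card((0,t] ∩ ℐ(x)) + Card((0,t] ∩ 𝒟(x))`
(meaningful when both sets are finite). -/
def absLocalTime (V : ℝ → ℝ) (x t : ℝ) : ℕ :=
  (incSet V x t).ncard + (decSet V x t).ncard

/-!
Since the continuous part is not constant, and the jumps of `V` have finite total size on compacts,
some interval `[a, b]` has `|Vc b - Vc a|` larger than twice the total jump size `J` of `V` on
`(a, b]`; then `|V b - V a| > J`, say `V a < V b`. For a level `x ∈ (V a, V b)`, the last time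
`c ≤ b` with `V c < x` is an upward passage through `x`, unless `x` lies in a jump interval
`[Vm s, V s]`, is a local extremum value of `V`, or is crossed infinitely often just before some
time. The jump intervals have total length at most `J`, local extremum values are countable, and
the levels of the last kind are null, because the number of crossings of `x` along the dyadic
subdivisions of `[a, b]` has integral at most the variation of `V`. So the upward passage levels
have measure at least `(V b - V a) - J > 0`.
-/

open Topology

section Crossings

variable {V : ℝ → ℝ} {x : ℝ}

lemma exists_mem_uIcc_succ_of_mem_uIcc (g : ℕ → ℝ) {p q : ℕ} (hpq : p < q)
    (hx : x ∈ uIcc (g p) (g q)) : ∃ i ∈ Finset.Ico p q, x ∈ uIcc (g i) (g (i + 1)) := by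
  induction q, hpq using Nat.le_induction with
  | base => exact ⟨p, by simp, hx⟩
  | succ q hpq ih =>
    rcases uIcc_subset_uIcc_union_uIcc hx with h | h
    · obtain ⟨i, hi, hxi⟩ := ih h
      exact ⟨i, Finset.Ico_subset_Ico_right q.le_succ hi, hxi⟩
    · exact ⟨q, Finset.mem_Ico.2 ⟨by omega, q.lt_succ_self⟩, h⟩

variable (V) in
def crossingCount (u : ℕ → ℝ) (n : ℕ) (x : ℝ) : ℝ≥0∞ :=
  ∑ i ∈ Finset.range n, (uIcc (V (u i)) (V (u (i + 1)))).indicator 1 x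

lemma measurable_crossingCount (u : ℕ → ℝ) (n : ℕ) : Measurable (crossingCount V u n) :=
  Finset.measurable_sum _ fun _ _ => measurable_one.indicator measurableSet_uIcc

lemma lintegral_crossingCount_le {u : ℕ → ℝ} {n : ℕ} {s : Set ℝ} (hu : MonotoneOn u (Iic n))
    (hus : ∀ i ≤ n, u i ∈ s) : ∫⁻ x, crossingCount V u n x ≤ eVariationOn V s := by
  calc ∫⁻ x, crossingCount V u n x
      = ∑ i ∈ Finset.range n, edist (V (u (i + 1))) (V (u i)) := by
        unfold crossingCount
        rw [lintegral_finsetSum _ fun _ _ => measurable_one.indicator measurableSet_uIcc]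
        refine Finset.sum_congr rfl fun i _ => ?_
        rw [lintegral_indicator_one measurableSet_uIcc, Real.volume_interval, edist_dist,
          Real.dist_eq]
    _ ≤ eVariationOn V s := eVariationOn.sum_le_of_monotoneOn_Iic hu hus

lemma crossingCount_le_sum_Ico {u u' : ℕ → ℝ} {φ : ℕ → ℕ} {m : ℕ}
    (hu : ∀ i ≤ m, u i = u' (φ i)) (hφ : StrictMonoOn φ (Iic m)) :
    crossingCount V u m x ≤
      ∑ i ∈ Finset.Ico (φ 0) (φ m), (uIcc (V (u' i)) (V (u' (i + 1)))).indicator 1 x := by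
  induction m with
  | zero => simp [crossingCount]
  | succ m ih =>
    have hφm : φ m < φ (m + 1) := hφ (by simp) (by simp) m.lt_succ_self
    rw [crossingCount, Finset.sum_range_succ, ← Finset.sum_Ico_consecutive _
      (hφ.monotoneOn (by simp) (by simp) (Nat.zero_le m)) hφm.le]
    refine add_le_add (ih (fun i hi => hu i (hi.trans m.le_succ))
      (hφ.mono (Iic_subset_Iic.2 m.le_succ))) ?_
    by_cases hx : x ∈ uIcc (V (u m)) (V (u (m + 1)))
    · rw [hu m m.le_succ, hu (m + 1) le_rfl] at hx
      obtain ⟨i, hi, hxi⟩ := exists_mem_uIcc_succ_of_mem_uIcc (fun j => V (u' j)) hφm hx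
      calc (uIcc (V (u m)) (V (u (m + 1)))).indicator (1 : ℝ → ℝ≥0∞) x ≤ 1 :=
            indicator_le_self' (fun _ _ => zero_le) x
        _ = (uIcc (V (u' i)) (V (u' (i + 1)))).indicator 1 x := (indicator_of_mem hxi 1).symm
        _ ≤ _ := Finset.single_le_sum (f := fun i =>
            (uIcc (V (u' i)) (V (u' (i + 1)))).indicator (1 : ℝ → ℝ≥0∞) x) (fun _ _ => zero_le) hi
    · simp [indicator_of_notMem hx]

lemma crossingCount_le_of_strictMonoOn {u u' : ℕ → ℝ} {φ : ℕ → ℕ} {m n : ℕ}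
    (hu : ∀ i ≤ m, u i = u' (φ i)) (hφ : StrictMonoOn φ (Iic m)) (hn : φ m ≤ n) :
    crossingCount V u m x ≤ crossingCount V u' n x :=
  (crossingCount_le_sum_Ico hu hφ).trans <| Finset.sum_le_sum_of_subset <|
    Finset.range_eq_Ico n ▸ Finset.Ico_subset_Ico (Nat.zero_le _) hn

lemma crossingCount_le_of_mem_image {u u' : ℕ → ℝ} {m n : ℕ} (hu : StrictMonoOn u (Iic m))
    (hu' : StrictMono u') (hmem : ∀ i ≤ m, u i ∈ u' '' Iic n) :
    crossingCount V u m x ≤ crossingCount V u' n x := by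
  choose! φ hφn hφ using hmem
  refine crossingCount_le_of_strictMonoOn (fun i hi => (hφ i hi).symm) (fun i hi j hj hij => ?_)
    (hφn m le_rfl)
  rw [← hu'.lt_iff_lt, hφ i hi, hφ j hj]
  exact hu hi hj hij

end Crossings

section Dyadic

variable {V : ℝ → ℝ} {a b t x : ℝ}

def dyadicPoint (a b : ℝ) (k i : ℕ) : ℝ := a + (b - a) * i / 2 ^ k

lemma dyadicPoint_two_pow (k : ℕ) : dyadicPoint a b k (2 ^ k) = b := by
  simp [dyadicPoint]

lemma dyadicPoint_mul_two_pow (k m i : ℕ) :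
    dyadicPoint a b (k + m) (i * 2 ^ m) = dyadicPoint a b k i := by
  simp only [dyadicPoint, pow_add, Nat.cast_mul, Nat.cast_pow, Nat.cast_ofNat]
  field_simp

lemma strictMono_dyadicPoint (hab : a < b) (k : ℕ) : StrictMono (dyadicPoint a b k) := by
  intro i j hij
  unfold dyadicPoint
  gcongr

lemma monotone_dyadicPoint (hab : a ≤ b) (k : ℕ) : Monotone (dyadicPoint a b k) := by
  intro i j hij
  unfold dyadicPoint
  gcongr

lemma dyadicPoint_mem_Icc (hab : a ≤ b) {k i : ℕ} (hi : i ≤ 2 ^ k) :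
    dyadicPoint a b k i ∈ Icc a b :=
  ⟨by simpa [dyadicPoint] using monotone_dyadicPoint hab k (Nat.zero_le i),
    (monotone_dyadicPoint hab k hi).trans (dyadicPoint_two_pow k).le⟩

lemma exists_dyadicPoint_mem_Ioo {p q : ℝ} (hap : a ≤ p) (hpq : p < q) (hqb : q ≤ b) :
    ∃ k i, dyadicPoint a b k i ∈ Ioo p q := by
  have hab : 0 < b - a := by linarith
  obtain ⟨k, hk⟩ := exists_nat_gt ((b - a) / (q - p))
  set δ := (b - a) / 2 ^ k with hδ
  have hδ0 : 0 < δ := by positivity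
  -- so that the first grid point after `p` lies before `q`
  have hδq : δ < q - p := by
    rw [hδ, div_lt_iff₀ (by positivity)]
    rw [div_lt_iff₀ (by linarith)] at hk
    have : (k : ℝ) < 2 ^ k := by exact_mod_cast Nat.lt_two_pow_self
    nlinarith
  set y := (p - a) / δ
  have hy : 0 ≤ y := div_nonneg (by linarith) hδ0.le
  have hpt : dyadicPoint a b k (⌊y⌋₊ + 1) = a + δ * (⌊y⌋₊ + 1) := by
    simp only [dyadicPoint, hδ]; push_cast; ring
  have hfl := Nat.lt_floor_add_one y
  have hfl' := Nat.floor_le hy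
  have hyδ : δ * y = p - a := by simp only [y]; field_simp
  refine ⟨k, ⌊y⌋₊ + 1, ?_, ?_⟩ <;> rw [hpt]
  · nlinarith
  · nlinarith

lemma dyadicPoint_image_subset {k l : ℕ} (hkl : k ≤ l) :
    dyadicPoint a b k '' Iic (2 ^ k) ⊆ dyadicPoint a b l '' Iic (2 ^ l) := by
  obtain ⟨m, rfl⟩ := Nat.exists_eq_add_of_le hkl
  rintro _ ⟨i, hi, rfl⟩
  refine ⟨i * 2 ^ m, ?_, dyadicPoint_mul_two_pow k m i⟩
  rw [pow_add]
  exact Nat.mul_le_mul_right _ hi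

lemma monotone_crossingCount_dyadicPoint (hab : a < b) :
    Monotone fun k => crossingCount V (dyadicPoint a b k) (2 ^ k) := by
  refine monotone_nat_of_le_succ fun k x => crossingCount_le_of_mem_image
    ((strictMono_dyadicPoint hab k).strictMonoOn _) (strictMono_dyadicPoint hab (k + 1))
    fun i hi => dyadicPoint_image_subset k.le_succ ⟨i, hi, rfl⟩

lemma ae_iSup_crossingCount_dyadicPoint_lt_top (hab : a < b)
    (hV : BoundedVariationOn V (Icc a b)) :
    ∀ᵐ x, ⨆ k, crossingCount V (dyadicPoint a b k) (2 ^ k) x < ⊤ := by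
  refine ae_lt_top (Measurable.iSup fun k => measurable_crossingCount _ _) ?_
  rw [lintegral_iSup (fun k => measurable_crossingCount _ _)
    (monotone_crossingCount_dyadicPoint hab)]
  exact ne_top_of_le_ne_top hV <| iSup_le fun k => lintegral_crossingCount_le
    ((monotone_dyadicPoint hab.le k).monotoneOn _) fun i hi => dyadicPoint_mem_Icc hab.le hi

lemma exists_dyadicPoint_mem_Ioo_of_frequently {P : ℝ → Prop} {p : ℝ}
    (hP : ∀ s ∈ Ioo p t, P s → ∀ᶠ r in 𝓝[≥] s, P r) (hfreq : ∃ᶠ s in 𝓝[<] t, P s)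
    (hap : a ≤ p) (hpt : p < t) (htb : t ≤ b) :
    ∃ k i, dyadicPoint a b k i ∈ Ioo p t ∧ P (dyadicPoint a b k i) := by
  obtain ⟨s, hPs, hs⟩ := (hfreq.and_eventually (Ioo_mem_nhdsLT hpt)).exists
  obtain ⟨u, hsu, hu⟩ := (mem_nhdsGE_iff_exists_Ico_subset.1 (hP s hs hPs))
  obtain ⟨k, i, hi⟩ := exists_dyadicPoint_mem_Ioo (a := a) (b := b) (hap.trans hs.1.le)
    (lt_min hsu hs.2) ((min_le_right _ _).trans htb)
  exact ⟨k, i, ⟨hs.1.trans hi.1, hi.2.trans_le (min_le_right _ _)⟩,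
    hu ⟨hi.1.le, hi.2.trans_le (min_le_left _ _)⟩⟩

lemma exists_dyadicPoint_across_of_frequently
    (hrc : ∀ s ∈ Icc a b, ContinuousWithinAt V (Ici s) s) (ht : t ∈ Ioc a b)
    (hlt : ∃ᶠ s in 𝓝[<] t, V s < x) (hgt : ∃ᶠ s in 𝓝[<] t, x < V s)
    {p y : ℝ} (hap : a ≤ p) (hpt : p < t) (hy : y ≠ x) :
    ∃ k i, dyadicPoint a b k i ∈ Ioo p t ∧ x ∈ uIcc y (V (dyadicPoint a b k i)) ∧
      V (dyadicPoint a b k i) ≠ x := by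
  have hIoo : Ioo p t ⊆ Icc a b := fun s hs => ⟨hap.trans hs.1.le, hs.2.le.trans ht.2⟩
  rcases hy.lt_or_gt with hy | hy
  · obtain ⟨k, i, hi, hxi⟩ := exists_dyadicPoint_mem_Ioo_of_frequently
      (fun s hs hxs => (hrc s (hIoo hs)).eventually_const_lt hxs) hgt hap hpt ht.2
    exact ⟨k, i, hi, ⟨min_le_of_left_le hy.le, le_max_of_le_right hxi.le⟩, hxi.ne'⟩
  · obtain ⟨k, i, hi, hxi⟩ := exists_dyadicPoint_mem_Ioo_of_frequently
      (fun s hs hxs => (hrc s (hIoo hs)).eventually_lt_const hxs) hlt hap hpt ht.2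
    exact ⟨k, i, hi, ⟨min_le_of_right_le hxi.le, le_max_of_le_left hy.le⟩, hxi.ne⟩

lemma exists_le_crossingCount_of_frequently (hab : a < b)
    (hrc : ∀ s ∈ Icc a b, ContinuousWithinAt V (Ici s) s) (ht : t ∈ Ioc a b)
    (hlt : ∃ᶠ s in 𝓝[<] t, V s < x) (hgt : ∃ᶠ s in 𝓝[<] t, x < V s) (n : ℕ) :
    ∃ k, (n : ℝ≥0∞) ≤ crossingCount V (dyadicPoint a b k) (2 ^ k) x := by
  have hgrid : ∀ {k i}, dyadicPoint a b k i < t →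
      dyadicPoint a b k i ∈ dyadicPoint a b k '' Iic (2 ^ k) := fun {k i} h =>
    ⟨i, ((strictMono_dyadicPoint hab k).lt_iff_lt.1
      (h.trans_le (ht.2.trans_eq (dyadicPoint_two_pow k).symm))).le, rfl⟩
  have chain : ∀ n : ℕ, ∃ k, ∃ c : ℕ → ℝ, (∀ i ≤ n, c i ∈ dyadicPoint a b k '' Iic (2 ^ k)) ∧
      (∀ i < n, c i < c (i + 1) ∧ x ∈ uIcc (V (c i)) (V (c (i + 1)))) ∧
      a ≤ c n ∧ c n < t ∧ V (c n) ≠ x := by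
    intro n
    induction n with
    | zero =>
      obtain ⟨k, i, hi, -, hne⟩ := exists_dyadicPoint_across_of_frequently hrc ht hlt hgt
        le_rfl ht.1 (lt_add_one x).ne'
      exact ⟨k, fun _ => dyadicPoint a b k i, fun _ _ => hgrid hi.2, by simp, hi.1.le, hi.2, hne⟩
    | succ n ih =>
      obtain ⟨k, c, hmem, hc, hac, hct, hne⟩ := ih
      obtain ⟨l, i, hi, hx, hne'⟩ :=
        exists_dyadicPoint_across_of_frequently hrc ht hlt hgt hac hct hne
      refine ⟨max k l, fun j => if j ≤ n then c j else dyadicPoint a b l i, fun j hj => ?_,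
        fun j hj => ?_, by simpa using hac.trans hi.1.le, by simpa using hi.2, by simpa using hne'⟩
      · dsimp only
        split_ifs with hjn
        · exact dyadicPoint_image_subset (le_max_left k l) (hmem j hjn)
        · exact dyadicPoint_image_subset (le_max_right k l) (hgrid hi.2)
      · rcases (Nat.lt_succ_iff.1 hj).lt_or_eq with hjn | rfl
        · simpa [hjn.le, Nat.succ_le_of_lt hjn] using hc j hjn
        · simpa using ⟨hi.1, hx⟩
  obtain ⟨k, c, hmem, hc, -⟩ := chain n
  refine ⟨k, ?_⟩
  calc (n : ℝ≥0∞) = crossingCount V c n x := by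
        rw [crossingCount, Finset.sum_congr rfl fun i hi =>
          indicator_of_mem (hc i (Finset.mem_range.1 hi)).2 1]
        simp
    _ ≤ _ := crossingCount_le_of_mem_image (strictMonoOn_Iic_of_lt_succ fun i hi => (hc i hi).1)
        (strictMono_dyadicPoint hab k) hmem

lemma volume_setOf_frequently_lt_and_gt_eq_zero (hab : a < b)
    (hrc : ∀ s ∈ Icc a b, ContinuousWithinAt V (Ici s) s) (hV : BoundedVariationOn V (Icc a b)) :
    volume {x | ∃ t ∈ Ioc a b, (∃ᶠ s in 𝓝[<] t, V s < x) ∧ ∃ᶠ s in 𝓝[<] t, x < V s} = 0 := by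
  refine measure_mono_null ?_ (ae_iff.1 (ae_iSup_crossingCount_dyadicPoint_lt_top hab hV))
  rintro x ⟨t, ht, hlt, hgt⟩ (hfin : _ < ⊤)
  obtain ⟨n, hn⟩ := ENNReal.exists_nat_gt hfin.ne
  obtain ⟨k, hk⟩ := exists_le_crossingCount_of_frequently hab hrc ht hlt hgt n
  exact (hk.trans (le_iSup (fun k => crossingCount V (dyadicPoint a b k) (2 ^ k) x) k)).not_gt hn

end Dyadic

lemma countable_image_setOf_isLocalMin {α β : Type*} [TopologicalSpace α]
    [SecondCountableTopology α] [PartialOrder β] (f : α → β) :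
    (f '' {x | IsLocalMin f x}).Countable := by
  obtain ⟨B, hBc, -, hB⟩ := TopologicalSpace.exists_countable_basis α
  have hmin : ∀ U : Set α, {y | ∃ x ∈ U, f x = y ∧ ∀ z ∈ U, y ≤ f z}.Subsingleton := by
    rintro U _ ⟨x, hx, rfl, hxU⟩ _ ⟨x', hx', rfl, hx'U⟩
    exact le_antisymm (hxU x' hx') (hx'U x hx)
  refine (hBc.biUnion fun U _ => (hmin U).countable).mono ?_
  rintro _ ⟨x, hx, rfl⟩
  obtain ⟨U, hUB, hxU, hU⟩ := hB.mem_nhds_iff.1 hx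
  exact mem_biUnion hUB ⟨x, hxU, rfl, fun z hz => hU hz⟩

lemma countable_image_setOf_isLocalExtr {α β : Type*} [TopologicalSpace α]
    [SecondCountableTopology α] [PartialOrder β] (f : α → β) :
    (f '' {x | IsLocalExtr f x}).Countable := by
  have : {x | IsLocalExtr f x} = {x | IsLocalMin f x} ∪ {x | IsLocalMax f x} := rfl
  rw [this, image_union]
  exact (countable_image_setOf_isLocalMin f).union (countable_image_setOf_isLocalMin (β := βᵒᵈ) f)

section Passage

variable {V Vm : ℝ → ℝ} {a b c x : ℝ}

lemma increasesThrough_of_lt_of_gt {u v : ℝ} (hc : 0 < c) (hcont : ContinuousAt V c)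
    (hVc : V c = x) (hu : u < c) (hv : c < v) (hlt : ∀ s ∈ Ioo u c, V s < x)
    (hgt : ∀ s ∈ Ioo c v, x < V s) : IncreasesThrough V x c := by
  refine ⟨hc, hVc, hcont.continuousWithinAt, min (c - u) (v - c), by simp [hu, hv],
    fun s _ hs => ⟨fun hsc => hVc ▸ hlt s ⟨?_, hsc⟩, fun hcs => hVc ▸ hgt s ⟨hcs, ?_⟩⟩⟩
  · linarith [abs_lt.1 hs, min_le_left (c - u) (v - c)]
  · linarith [abs_lt.1 hs, min_le_right (c - u) (v - c)]

lemma lt_of_forall_le_of_notMem_image_isLocalExtr {p q : ℝ}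
    (hx : x ∉ V '' {t | IsLocalExtr V t}) (h : ∀ s ∈ Ioo p q, x ≤ V s) :
    ∀ s ∈ Ioo p q, x < V s := fun s hs => (h s hs).lt_of_ne fun hxs => hx
  ⟨s, Or.inl (Filter.mem_of_superset (Ioo_mem_nhds hs.1 hs.2) fun r hr => hxs ▸ h r hr), hxs.symm⟩

lemma lt_of_forall_ge_of_notMem_image_isLocalExtr {p q : ℝ}
    (hx : x ∉ V '' {t | IsLocalExtr V t}) (h : ∀ s ∈ Ioo p q, V s ≤ x) :
    ∀ s ∈ Ioo p q, V s < x := fun s hs => (h s hs).lt_of_ne fun hxs => hx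
  ⟨s, Or.inr (Filter.mem_of_superset (Ioo_mem_nhds hs.1 hs.2) fun r hr => hxs ▸ h r hr), hxs⟩

lemma exists_Ioo_lt_of_not_frequently (hbelow : ∀ u < c, ∃ t ∈ Ioc u c, V t < x)
    (hll : Tendsto V (𝓝[<] c) (𝓝 (Vm c))) (hjump : x ∈ uIcc (Vm c) (V c) → V c = Vm c)
    (hextr : x ∉ V '' {t | IsLocalExtr V t})
    (hosc : ¬ ((∃ᶠ s in 𝓝[<] c, V s < x) ∧ ∃ᶠ s in 𝓝[<] c, x < V s)) :
    (∃ u < c, ∀ s ∈ Ioo u c, V s < x) ∧ Vm c ≤ x := by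
  rcases not_and_or.1 hosc with h | h <;> rw [Filter.not_frequently] at h <;>
    obtain ⟨u, hu, hsub⟩ := mem_nhdsLT_iff_exists_Ioo_subset.1 h
  · obtain ⟨t, ⟨hut, htc⟩, hVt⟩ := hbelow u hu
    have hVc : V c < x := htc.eq_of_not_lt (fun htc => hsub ⟨hut, htc⟩ hVt) ▸ hVt
    have hVm : x ≤ Vm c := ge_of_tendsto hll (h.mono fun s => not_lt.1)
    have := hjump ⟨(min_le_right _ _).trans hVc.le, hVm.trans (le_max_left _ _)⟩
    linarith
  · exact ⟨⟨u, hu, lt_of_forall_ge_of_notMem_image_isLocalExtr hextr fun s hs =>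
      not_lt.1 (hsub hs)⟩, le_of_tendsto hll (h.mono fun s => not_lt.1)⟩

/-- The witness is the supremum of the times in `[a, b]` at which `V` is below `x`. -/
lemma exists_increasesThrough (ha : 0 ≤ a) (hab : a ≤ b)
    (hrc : ∀ s ∈ Icc a b, ContinuousWithinAt V (Ici s) s)
    (hll : ∀ s ∈ Ioc a b, Tendsto V (𝓝[<] s) (𝓝 (Vm s)))
    (hxa : V a < x) (hxb : x < V b)
    (hjump : ∀ s ∈ Ioc a b, x ∈ uIcc (Vm s) (V s) → V s = Vm s)
    (hextr : x ∉ V '' {t | IsLocalExtr V t})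
    (hosc : ∀ t ∈ Ioc a b, ¬ ((∃ᶠ s in 𝓝[<] t, V s < x) ∧ ∃ᶠ s in 𝓝[<] t, x < V s)) :
    ∃ t, IncreasesThrough V x t := by
  set A := {t | t ∈ Icc a b ∧ V t < x}
  have haA : a ∈ A := ⟨⟨le_rfl, hab⟩, hxa⟩
  have hA : BddAbove A := ⟨b, fun t ht => ht.1.2⟩
  set c := sSup A
  have hac : a ≤ c := le_csSup hA haA
  have hcb : c ≤ b := csSup_le ⟨a, haA⟩ fun t ht => ht.1.2
  have hright : ∀ s ∈ Ioc c b, x ≤ V s := fun s hs =>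
    not_lt.1 fun hVs => (le_csSup hA ⟨⟨hac.trans hs.1.le, hs.2⟩, hVs⟩).not_gt hs.1
  have hc_right : c < b → x ≤ V c := fun hcb' =>
    ge_of_tendsto ((hrc c ⟨hac, hcb⟩).mono_left (nhdsWithin_mono _ Ioi_subset_Ici_self))
      (Filter.mem_of_superset (Ioc_mem_nhdsGT hcb') hright)
  have hab' : a < b := hab.lt_of_ne (by rintro rfl; linarith)
  have hac' : a < c := hac.lt_of_ne fun h => (hc_right (h ▸ hab')).not_gt (h ▸ hxa)
  have hc : c ∈ Ioc a b := ⟨hac', hcb⟩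
  have hVc_ge : x ≤ V c := hcb.lt_or_eq.elim hc_right fun h => h ▸ hxb.le
  obtain ⟨⟨u, hu, hleft⟩, hVm⟩ := exists_Ioo_lt_of_not_frequently
    (fun u hu => (exists_lt_of_lt_csSup ⟨a, haA⟩ hu).imp fun t ht =>
      ⟨⟨ht.2, le_csSup hA ht.1⟩, ht.1.2⟩) (hll c hc) (hjump c hc) hextr (hosc c hc)
  have hcVm : V c = Vm c :=
    hjump c hc ⟨(min_le_left _ _).trans hVm, hVc_ge.trans (le_max_right _ _)⟩
  have hVc : V c = x := by linarith
  have hcb' : c < b := hcb.lt_of_ne fun h => hxb.ne (h ▸ hVc).symm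
  have hcont : ContinuousAt V c := continuousAt_iff_continuous_left'_right'.2
    ⟨by rw [ContinuousWithinAt, hcVm]; exact hll c hc,
      (hrc c ⟨hac, hcb⟩).mono Ioi_subset_Ici_self⟩
  exact ⟨c, increasesThrough_of_lt_of_gt (ha.trans_lt hac') hcont hVc hu hcb' hleft
    (lt_of_forall_le_of_notMem_image_isLocalExtr hextr fun s hs => hright s ⟨hs.1, hs.2.le⟩)⟩

lemma volume_pos_setOf_increasesThrough (ha : 0 ≤ a) (hab : a < b)
    (hrc : ∀ s ∈ Icc a b, ContinuousWithinAt V (Ici s) s)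
    (hll : ∀ s ∈ Ioc a b, Tendsto V (𝓝[<] s) (𝓝 (Vm s))) (hV : BoundedVariationOn V (Icc a b))
    (hJ : ∑' s : Ioc a b, ‖V s - Vm s‖ₑ < ENNReal.ofReal (V b - V a)) :
    0 < volume {x | ∃ t, IncreasesThrough V x t} := by
  set w : Ioc a b → ℝ≥0∞ := fun s => ‖V s - Vm s‖ₑ
  have hw : (Function.support w).Countable :=
    Summable.countable_support_ennreal (hJ.trans_le le_top).ne
  set jumps := ⋃ s ∈ Function.support w, uIcc (Vm s) (V s)
  set oscillations :=
    {x | ∃ t ∈ Ioc a b, (∃ᶠ s in 𝓝[<] t, V s < x) ∧ ∃ᶠ s in 𝓝[<] t, x < V s}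
  set E := jumps ∪ (V '' {t | IsLocalExtr V t} ∪ oscillations)
  have hE : volume E ≤ ∑' s, w s := calc
    volume E ≤ volume jumps := by
      refine (measure_union_le _ _).trans_eq ?_
      rw [measure_union_null ((countable_image_setOf_isLocalExtr V).measure_zero _)
        (volume_setOf_frequently_lt_and_gt_eq_zero hab hrc hV), add_zero]
    _ ≤ ∑' s : Function.support w, volume (uIcc (Vm s) (V s)) := measure_biUnion_le _ hw _
    _ = ∑' s, w s := by
      simp only [Real.volume_interval, ← Real.enorm_eq_ofReal_abs]
      exact tsum_subtype_support w
  have hsub : Ioo (V a) (V b) \ E ⊆ {x | ∃ t, IncreasesThrough V x t} := by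
    rintro x ⟨hx, hxE⟩
    refine exists_increasesThrough ha hab.le hrc hll hx.1 hx.2 (fun s hs hxs => ?_)
      (fun h => hxE (Or.inr (Or.inl h))) (fun t ht h => hxE (Or.inr (Or.inr ⟨t, ht, h⟩)))
    by_contra hne
    exact hxE (Or.inl (mem_biUnion (x := ⟨s, hs⟩) (by simpa [w, sub_eq_zero] using hne) hxs))
  calc 0 < volume (Ioo (V a) (V b)) - volume E := by
        rw [Real.volume_Ioo]; exact tsub_pos_of_lt (hE.trans_lt hJ)
    _ ≤ volume (Ioo (V a) (V b) \ E) := le_measure_sdiff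
    _ ≤ _ := measure_mono hsub

lemma volume_pos_setOf_decreasesThrough (ha : 0 ≤ a) (hab : a < b)
    (hrc : ∀ s ∈ Icc a b, ContinuousWithinAt V (Ici s) s)
    (hll : ∀ s ∈ Ioc a b, Tendsto V (𝓝[<] s) (𝓝 (Vm s))) (hV : BoundedVariationOn V (Icc a b))
    (hJ : ∑' s : Ioc a b, ‖V s - Vm s‖ₑ < ENNReal.ofReal (V a - V b)) :
    0 < volume {x | ∃ t, DecreasesThrough V x t} := by
  have hneg : {x | ∃ t, IncreasesThrough (fun s => -V s) x t} =
      -{x | ∃ t, DecreasesThrough V x t} := by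
    ext x
    simp [DecreasesThrough]
  have := volume_pos_setOf_increasesThrough (V := fun s => -V s) (Vm := fun s => -Vm s) ha hab
    (fun s hs => (hrc s hs).neg) (fun s hs => (hll s hs).neg)
    (LipschitzWith.id.neg.comp_boundedVariationOn hV)
    (by simpa only [neg_sub_neg, enorm_sub_rev (Vm _)] using hJ)
  rwa [hneg, Measure.measure_neg] at this

end Passage

section Gap

variable {w : ℝ → ℝ≥0∞} {c d : ℝ} {K : ℝ≥0∞}

lemma edist_le_mul_tsum_Ioo {g : ℝ → ℝ} (hg : ContinuousOn g (Icc c d))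
    (H : ∀ a b, c ≤ a → a < b → b ≤ d → edist (g b) (g a) ≤ K * ∑' s : Ioc a b, w s)
    {a b : ℝ} (hca : c ≤ a) (hab : a ≤ b) (hbd : b ≤ d) :
    edist (g b) (g a) ≤ K * ∑' s : Ioo a b, w s := by
  obtain rfl | hab := hab.eq_or_lt
  · simp
  have hsub : Ioo a b ⊆ Icc c d := fun r hr => ⟨hca.trans hr.1.le, hr.2.le.trans hbd⟩
  have hlim : Tendsto (fun r => edist (g r) (g a)) (𝓝[<] b) (𝓝 (edist (g b) (g a))) :=
    ((hg b ⟨hca.trans hab.le, hbd⟩).mono_of_mem_nhdsWithin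
      (Filter.mem_of_superset (Ioo_mem_nhdsLT hab) hsub)).edist tendsto_const_nhds
  refine le_of_tendsto hlim (Filter.mem_of_superset (Ioo_mem_nhdsLT hab) fun r hr => ?_)
  refine (H a r hca hr.1 (hr.2.le.trans hbd)).trans ?_
  gcongr
  exact ENNReal.tsum_mono_subtype w (Ioc_subset_Ioo_right hr.2)

lemma edist_le_mul_tsum_Ioo_sdiff {α : Type*} [PseudoEMetricSpace α] {g : ℝ → α}
    (H : ∀ a b, c ≤ a → a ≤ b → b ≤ d → edist (g b) (g a) ≤ K * ∑' s : Ioo a b, w s)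
    (Φ : Finset ℝ) {a b : ℝ} (hca : c ≤ a) (hab : a ≤ b) (hbd : b ≤ d) :
    edist (g b) (g a) ≤ K * ∑' s : ↥(Ioo a b \ Φ), w s := by
  induction Φ using Finset.induction_on generalizing a b with
  | empty =>
    rw [Finset.coe_empty, sdiff_empty]
    exact H a b hca hab hbd
  | insert p Φ _ ih =>
    by_cases hp : p ∈ Ioo a b
    · have hdisj : Disjoint (Ioo p b \ ↑Φ) (Ioo a p \ ↑Φ) :=
        disjoint_left.2 fun r hr hr' => lt_asymm hr.1.1 hr'.1.2
      have hsub : (Ioo p b \ ↑Φ) ∪ (Ioo a p \ ↑Φ) ⊆ Ioo a b \ ↑(insert p Φ) := by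
        rintro r (⟨⟨h1, h2⟩, h3⟩ | ⟨⟨h1, h2⟩, h3⟩) <;> simp only [Finset.coe_insert,
          Set.mem_sdiff, mem_insert_iff, mem_Ioo] <;> grind
      calc edist (g b) (g a) ≤ edist (g b) (g p) + edist (g p) (g a) := edist_triangle _ _ _
        _ ≤ K * ∑' s : ↥(Ioo p b \ Φ), w s + K * ∑' s : ↥(Ioo a p \ Φ), w s :=
          add_le_add (ih (hca.trans hp.1.le) hp.2.le hbd) (ih hca hp.1.le (hp.2.le.trans hbd))
        _ = K * ∑' s : ↥((Ioo p b \ Φ) ∪ (Ioo a p \ Φ)), w s := by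
          rw [ENNReal.summable.tsum_union_disjoint hdisj ENNReal.summable, mul_add]
        _ ≤ K * ∑' s : ↥(Ioo a b \ ↑(insert p Φ)), w s := by
          gcongr
          exact ENNReal.tsum_mono_subtype w hsub
    · rw [Finset.coe_insert, sdiff_insert_of_notMem hp]
      exact ih hca hab hbd

/-- Removing finitely many atoms of `w` leaves arbitrarily little mass, and by continuity the
increments of `g` do not see the removed atoms. -/
lemma exists_mul_tsum_Ioc_lt_edist {g : ℝ → ℝ} (hcd : c ≤ d) (hg : ContinuousOn g (Icc c d))
    (hw : ∑' s : Ioc c d, w s ≠ ⊤) (hK : K ≠ ⊤) (hne : g d ≠ g c) :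
    ∃ a b, c ≤ a ∧ a < b ∧ b ≤ d ∧ K * ∑' s : Ioc a b, w s < edist (g b) (g a) := by
  by_contra! H
  set w' := (Ioc c d).indicator w
  have htail := ENNReal.tendsto_tsum_compl_atTop_zero (f := w') (by rwa [← tsum_subtype])
  have hle : ∀ Φ : Finset ℝ, edist (g d) (g c) ≤ K * ∑' s : {s // s ∉ Φ}, w' s := by
    intro Φ
    refine (edist_le_mul_tsum_Ioo_sdiff (fun a b => edist_le_mul_tsum_Ioo hg H) Φ le_rfl hcd
      le_rfl).trans ?_
    gcongr
    calc ∑' s : ↥(Ioo c d \ Φ), w s = ∑' s : ↥(Ioo c d \ Φ), w' s :=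
          tsum_congr fun s => (indicator_of_mem (Ioo_subset_Ioc_self s.2.1) w).symm
      _ ≤ ∑' s : {s // s ∉ Φ}, w' s := ENNReal.tsum_mono_subtype w' fun s hs => hs.2
  have := ge_of_tendsto' (ENNReal.Tendsto.const_mul htail (Or.inr hK)) hle
  rw [mul_zero, nonpos_iff_eq_zero, edist_eq_zero] at this
  exact hne this

end Gap

lemma enorm_sub_le_tsum_Ioc {f F : ℝ → ℝ} {a b : ℝ} (ha : 0 ≤ a) (hab : a ≤ b)
    (hFa : HasSum (fun s : Ioc (0 : ℝ) a => f s) (F a))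
    (hFb : HasSum (fun s : Ioc (0 : ℝ) b => f s) (F b)) :
    ‖F b - F a‖ₑ ≤ ∑' s : Ioc a b, ‖f s‖ₑ := by
  have hdiff : Ioc 0 b \ Ioc 0 a = Ioc a b := by
    ext s
    simp only [Set.mem_sdiff, mem_Ioc]
    constructor
    · rintro ⟨⟨hs, hsb⟩, hsa⟩
      exact ⟨not_le.1 fun h => hsa ⟨hs, h⟩, hsb⟩
    · rintro ⟨has, hsb⟩
      exact ⟨⟨by linarith, hsb⟩, fun h => by linarith [h.2]⟩
  have hsum : HasSum ((Ioc a b).indicator f) (F b - F a) := by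
    rw [← hdiff, indicator_sdiff (Ioc_subset_Ioc_right hab)]
    exact (hasSum_subtype_iff_indicator.1 hFb).sub (hasSum_subtype_iff_indicator.1 hFa)
  rw [← (hasSum_subtype_iff_indicator.2 hsum).tsum_eq]
  exact enorm_tsum_le_tsum_enorm

lemma lt_ofReal_or_lt_ofReal_of_two_mul_lt {c d : ℝ} {J : ℝ≥0∞} (hc : 2 * J < ‖c‖ₑ)
    (hd : ‖d‖ₑ ≤ J) : J < ENNReal.ofReal (c + d) ∨ J < ENNReal.ofReal (-c - d) := by
  have hJ : J ≠ ⊤ := by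
    rintro rfl
    simp at hc
  rw [Real.enorm_eq_ofReal_abs, ENNReal.lt_ofReal_iff_toReal_lt (by finiteness),
    ENNReal.toReal_mul, ENNReal.toReal_ofNat] at hc
  rw [Real.enorm_eq_ofReal_abs, ENNReal.ofReal_le_iff_le_toReal hJ] at hd
  rw [ENNReal.lt_ofReal_iff_toReal_lt hJ, ENNReal.lt_ofReal_iff_toReal_lt hJ]
  cases abs_cases c <;> cases abs_cases d <;> [left; left; right; right] <;> linarith

theorem positive_measure_of_crossed_levels_general
    (V Vm Vc Vd : ℝ → ℝ)
    (hV_rc : ∀ s ∈ Set.Ici (0 : ℝ), ContinuousWithinAt V (Set.Ici s) s)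
    (hV_ll : ∀ s ∈ Set.Ioi (0 : ℝ),
      Filter.Tendsto V (nhdsWithin s (Set.Iio s)) (nhds (Vm s)))
    (hV_bv : ∀ T : ℝ, BoundedVariationOn V (Set.Icc 0 T))
    (hdecomp : ∀ s ∈ Set.Ici (0 : ℝ), V s = Vc s + Vd s)
    (hVc_cont : ContinuousOn Vc (Set.Ici 0))
    (hVd_sum : ∀ s ∈ Set.Ici (0 : ℝ),
      HasSum (fun u : Set.Ioc (0 : ℝ) s => V u.1 - Vm u.1) (Vd s))
    (hVc_nondeg : ∃ s ∈ Set.Ici (0 : ℝ), Vc s ≠ Vc 0) :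
    0 < volume {x : ℝ | ∃ s : ℝ, IncreasesThrough V x s ∨ DecreasesThrough V x s} := by
  obtain ⟨T, hT, hVcT⟩ := hVc_nondeg
  have hw : ∑' s : Ioc (0 : ℝ) T, ‖V s - Vm s‖ₑ ≠ ⊤ :=
    tsum_enorm_ne_top_iff_summable_norm.2 (hVd_sum T hT).summable.norm
  obtain ⟨a, b, ha, hab, -, hgap⟩ := exists_mul_tsum_Ioc_lt_edist (w := fun s => ‖V s - Vm s‖ₑ)
    (K := 2) (mem_Ici.1 hT) (hVc_cont.mono Icc_subset_Ici_self) hw (by norm_num) hVcT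
  have hb : 0 ≤ b := ha.trans hab.le
  have hrc : ∀ s ∈ Icc a b, ContinuousWithinAt V (Ici s) s := fun s hs => hV_rc s (ha.trans hs.1)
  have hll : ∀ s ∈ Ioc a b, Tendsto V (𝓝[<] s) (𝓝 (Vm s)) := fun s hs =>
    hV_ll s (ha.trans_lt hs.1)
  have hbv : BoundedVariationOn V (Icc a b) := (hV_bv b).mono (Icc_subset_Icc_left ha)
  have hVab : V b - V a = (Vc b - Vc a) + (Vd b - Vd a) := by
    rw [hdecomp a ha, hdecomp b hb]; ring
  have hVba : V a - V b = -(Vc b - Vc a) - (Vd b - Vd a) := by linarith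
  have hjump := enorm_sub_le_tsum_Ioc (f := fun s => V s - Vm s) ha hab.le
    (hVd_sum a ha) (hVd_sum b hb)
  rw [edist_eq_enorm_sub] at hgap
  rcases lt_ofReal_or_lt_ofReal_of_two_mul_lt hgap hjump with h | h
  · exact (volume_pos_setOf_increasesThrough ha hab hrc hll hbv (hVab ▸ h)).trans_le
      (measure_mono fun x ⟨t, ht⟩ => ⟨t, Or.inl ht⟩)
  · exact (volume_pos_setOf_decreasesThrough ha hab hrc hll hbv (hVba ▸ h)).trans_le
      (measure_mono fun x ⟨t, ht⟩ => ⟨t, Or.inr ht⟩)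

/-- Let `V` be càdlàg on `[0,∞)` with finite variation on compacts, with
canonical decomposition `V = Vc + Vd`. If the continuous part is nondegenerate, i.e. `Vc`
is not identically equal to `Vc 0` on `[0,∞)`, then the set of levels `x` through which
`V` increases or decreases at some time has positive Lebesgue (outer) measure. -/
theorem positive_measure_of_crossed_levels
    (V Vm Vc Vd : ℝ → ℝ)
    (hV_rc : ∀ s ∈ Set.Ici (0 : ℝ), ContinuousWithinAt V (Set.Ici s) s)
    (hV_ll : ∀ s ∈ Set.Ioi (0 : ℝ),
      Filter.Tendsto V (nhdsWithin s (Set.Iio s)) (nhds (Vm s)))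
    (hV_bv : ∀ T : ℝ, BoundedVariationOn V (Set.Icc 0 T))
    (hdecomp : ∀ s ∈ Set.Ici (0 : ℝ), V s = Vc s + Vd s)
    (hVc_cont : ContinuousOn Vc (Set.Ici 0))
    (hVc_bv : ∀ T : ℝ, BoundedVariationOn Vc (Set.Icc 0 T))
    (hVd_sum : ∀ s ∈ Set.Ici (0 : ℝ),
      HasSum (fun u : Set.Ioc (0 : ℝ) s => V u.1 - Vm u.1) (Vd s))
    (hVd_abs : ∀ s ∈ Set.Ici (0 : ℝ),
      Summable (fun u : Set.Ioc (0 : ℝ) s => |V u.1 - Vm u.1|))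
    (hVc_nondeg : ∃ s ∈ Set.Ici (0 : ℝ), Vc s ≠ Vc 0) :
    0 < volume {x : ℝ | ∃ s : ℝ, IncreasesThrough V x s ∨ DecreasesThrough V x s} :=
  positive_measure_of_crossed_levels_general V Vm Vc Vd hV_rc hV_ll hV_bv hdecomp hVc_cont hVd_sum
    hVc_nondeg
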